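/- arXiv:1707.01438 — 4 statements merged into one kernel-verified Lean document; each statement's English description precedes it below -/
import Mathlib

section
/- Let M be a real m-dimensional C^1 submanifold of C^n, and let p be a point of M. Regarding the differentials dz_1, ..., dz_n of the complex coordinate functions as complex-valued 1-forms on M at p, the complex dimension of the complex tangent space H_pM = T_pM ∩ i·T_pM equals m minus the complex dimension of the span of {dz_1(p), ..., dz_n(p)} in the complexified cotangent space of M at p. -/
/-!
The real subspaces `T` and `iT` of `ℂⁿ` both have dimension `m`. Their intersection is `H_p M`
and their sum is the complex span of `T`, i.e. the column space of the complex Jacobian `J`,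
so counting real dimensions gives `2 dim_ℂ H_p M + 2 rank J = 2m`. The forms `dz_j` are the
rows of `J`, so they span a space of dimension `rank J` as well.
-/

open Module Submodule

section ComplexTangent

variable {V : Type*} [AddCommGroup V] [Module ℂ V] [Module ℝ V] [IsScalarTower ℝ ℂ V]

abbrev mulI : V →ₗ[ℝ] V := (Complex.I • (LinearMap.id : V →ₗ[ℂ] V)).restrictScalars ℝ

lemma I_smul_mem_sup_map_mulI {T : Submodule ℝ V} {v : V} (hv : v ∈ T ⊔ T.map mulI) :
    Complex.I • v ∈ T ⊔ T.map mulI := by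
  obtain ⟨t, ht, _, ⟨t', ht', rfl⟩, rfl⟩ := mem_sup.1 hv
  have : Complex.I • (t + mulI t') = -t' + mulI t := by
    simp [smul_smul, add_comm]
  exact this ▸ add_mem_sup (neg_mem ht') (mem_map_of_mem ht)

lemma restrictScalars_span_complex (T : Submodule ℝ V) :
    (span ℂ (T : Set V)).restrictScalars ℝ = T ⊔ T.map mulI := by
  refine le_antisymm ?_ (sup_le subset_span ?_)
  · let S : Submodule ℂ V :=
      { (T ⊔ T.map mulI).toAddSubmonoid with
        smul_mem' := fun c v hv => by
          have ofReal_smul (r : ℝ) (w : V) : (r : ℂ) • w = r • w :=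
            IsScalarTower.algebraMap_smul ℂ r w
          rw [← Complex.re_add_im c, add_smul, mul_smul, ofReal_smul, ofReal_smul]
          exact add_mem (smul_mem _ _ hv) (smul_mem _ _ (I_smul_mem_sup_map_mulI hv)) }
    exact (span_le.2 (fun t ht => mem_sup_left ht) : span ℂ (T : Set V) ≤ S)
  · rintro _ ⟨t, ht, rfl⟩
    exact smul_mem _ Complex.I (subset_span ht)

lemma finrank_map_mulI (T : Submodule ℝ V) :
    finrank ℝ (T.map mulI) = finrank ℝ T :=
  ((LinearEquiv.smulOfUnit (Units.mk0 Complex.I Complex.I_ne_zero)).restrictScalars ℝ).finrank_map_eq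
    T

lemma finrank_real_eq_two_mul (W : Submodule ℂ V) :
    finrank ℝ (W.restrictScalars ℝ) = 2 * finrank ℂ W := by
  rw [((restrictScalarsEquiv ℝ ℂ V W).restrictScalars ℝ).finrank_eq,
    ← Complex.finrank_real_complex, finrank_mul_finrank]

lemma finrank_complex_inf_add_finrank_span [FiniteDimensional ℝ V] (T : Submodule ℝ V)
    (H : Submodule ℂ V) (hH : H.restrictScalars ℝ = T ⊓ T.map mulI) :
    finrank ℂ H + finrank ℂ (span ℂ (T : Set V)) = finrank ℝ T := by
  have h := finrank_sup_add_finrank_inf_eq T (T.map mulI)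
  rw [← restrictScalars_span_complex, ← hH, finrank_map_mulI, finrank_real_eq_two_mul,
    finrank_real_eq_two_mul] at h
  omega

end ComplexTangent

namespace Matrix

variable {ι κ : Type*} [Fintype ι] [DecidableEq ι]

lemma finrank_span_range_proj_comp_mulVecLin {K : Type*} [Field K] [Fintype κ]
    (A : Matrix κ ι K) :
    finrank K (span K (Set.range fun j => (LinearMap.proj j).comp A.mulVecLin)) = A.rank := by
  let e := LinearEquiv.piRing K K ι K
  have rows : ((e : Dual K (ι → K) →ₗ[K] (ι → K)) ∘
      fun j => (LinearMap.proj j).comp A.mulVecLin) = A.row := by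
    funext j k
    simp [e, Matrix.mulVec_single]
  rw [← e.finrank_map_eq, map_span, ← Set.range_comp, rows, rank_eq_finrank_span_row]

lemma rank_eq_finrank_span_range_of_col (A : (ι → ℝ) →ₗ[ℝ] (κ → ℂ)) (J : Matrix κ ι ℂ)
    (hJ : ∀ j k, J j k = A (Pi.single k 1) j) :
    J.rank = finrank ℂ (span ℂ (LinearMap.range A : Set (κ → ℂ))) := by
  have cols : J.col = A ∘ Pi.basisFun ℝ ι := by
    funext k j
    simp [hJ]
  rw [rank_eq_finrank_span_cols, cols, Set.range_comp, LinearMap.range_eq_map,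
    ← (Pi.basisFun ℝ ι).span_eq, map_span, span_span_of_tower]

end Matrix

theorem stmt_0_general {m n : ℕ} (U : Set (Fin m → ℝ))
    (x : Fin m → ℝ) (hx : x ∈ U)
    (Dg : (Fin m → ℝ) → ((Fin m → ℝ) →L[ℝ] (Fin n → ℂ)))
    (himm : ∀ y ∈ U, Function.Injective (Dg y))
    -- the tangent space `T_p M ⊆ ℂⁿ` at `p = g x`, as a real subspace
    (T : Submodule ℝ (Fin n → ℂ))
    (hT : T = LinearMap.range ((Dg x) : (Fin m → ℝ) →ₗ[ℝ] (Fin n → ℂ)))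
    -- the complex tangent space `H_p M = T_p M ∩ i T_p M`, a complex subspace
    (H : Submodule ℂ (Fin n → ℂ))
    (hH : (H : Set (Fin n → ℂ)) =
      (T : Set (Fin n → ℂ)) ∩
        ((T.map ((Complex.I • (LinearMap.id : (Fin n → ℂ) →ₗ[ℂ] (Fin n → ℂ))).restrictScalars ℝ)) :
          Set (Fin n → ℂ)))
    -- the complex Jacobian matrix of `g` at `x`
    (J : Matrix (Fin n) (Fin m) ℂ)
    (hJ : ∀ j k, J j k = Dg x (Pi.single k 1) j)
    -- the differentials `dz_j(p)` as elements of the complexified cotangent space of `M` at `p`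
    (dz : Fin n → Module.Dual ℂ (Fin m → ℂ))
    (hdz : ∀ j, dz j = (LinearMap.proj j).comp J.mulVecLin) :
    Module.finrank ℂ H =
      m - Module.finrank ℂ (Submodule.span ℂ (Set.range dz)) := by
  obtain rfl : dz = fun j => (LinearMap.proj j).comp J.mulVecLin := funext hdz
  have dim_T : finrank ℝ T = m := by
    rw [hT, LinearMap.finrank_range_of_inj (himm x hx), finrank_fin_fun]
  have dims := finrank_complex_inf_add_finrank_span T H (SetLike.coe_injective hH)
  rw [Matrix.finrank_span_range_proj_comp_mulVecLin,
    Matrix.rank_eq_finrank_span_range_of_col _ J hJ, ← hT]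
  omega

/-- Let `M` be a real `m`-dimensional `C¹` submanifold of `ℂⁿ`
(presented locally near `p` as the image of a `C¹` embedding
`g : ℝᵐ ⊇ U → ℂⁿ` with injective differential, `p = g x`).  The tangent space
`T = T_p M` is the range of the differential `Dg x`, the complex tangent space is
`H_p M = T ∩ i T`, and the differentials `dz_1, …, dz_n` at `p`, regarded as
complex-valued forms on the complexified tangent space `ℂᵐ` of `M` at `p`, are the
complex-linear extensions `v ↦ (J.mulVec v) j` of the components of `Dg x`
(where `J` is the complex Jacobian matrix).  Then
`dim_ℂ H_p M = m - dim_ℂ span{dz_1(p), …, dz_n(p)}`. -/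
theorem stmt_0 {m n : ℕ} (U : Set (Fin m → ℝ)) (hU : IsOpen U)
    (x : Fin m → ℝ) (hx : x ∈ U)
    (g : (Fin m → ℝ) → (Fin n → ℂ))
    (Dg : (Fin m → ℝ) → ((Fin m → ℝ) →L[ℝ] (Fin n → ℂ)))
    (hg : ∀ y ∈ U, HasFDerivAt g (Dg y) y)
    (hDg : ContinuousOn Dg U)
    (himm : ∀ y ∈ U, Function.Injective (Dg y))
    (hemb : Topology.IsEmbedding (U.restrict g))
    -- the tangent space `T_p M ⊆ ℂⁿ` at `p = g x`, as a real subspace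
    (T : Submodule ℝ (Fin n → ℂ))
    (hT : T = LinearMap.range ((Dg x) : (Fin m → ℝ) →ₗ[ℝ] (Fin n → ℂ)))
    -- the complex tangent space `H_p M = T_p M ∩ i T_p M`, a complex subspace
    (H : Submodule ℂ (Fin n → ℂ))
    (hH : (H : Set (Fin n → ℂ)) =
      (T : Set (Fin n → ℂ)) ∩
        ((T.map ((Complex.I • (LinearMap.id : (Fin n → ℂ) →ₗ[ℂ] (Fin n → ℂ))).restrictScalars ℝ)) :
          Set (Fin n → ℂ)))
    -- the complex Jacobian matrix of `g` at `x`
    (J : Matrix (Fin n) (Fin m) ℂ)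
    (hJ : ∀ j k, J j k = Dg x (Pi.single k 1) j)
    -- the differentials `dz_j(p)` as elements of the complexified cotangent space of `M` at `p`
    (dz : Fin n → Module.Dual ℂ (Fin m → ℂ))
    (hdz : ∀ j, dz j = (LinearMap.proj j).comp J.mulVecLin) :
    Module.finrank ℂ H =
      m - Module.finrank ℂ (Submodule.span ℂ (Set.range dz)) :=
  stmt_0_general U x hx Dg himm T hT H hH J hJ dz hdz
end

section
/- Let A be a uniform algebra on a compact Hausdorff space X whose maximal ideal space is X (i.e., every nonzero multiplicative linear functional on A is evaluation at a point of X). If Y is a closed subset of X containing the essential set of A, then the maximal ideal space of the restriction algebra A|Y (the closure of the restrictions of functions in A to Y) is Y. -/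
set_option synthInstance.maxHeartbeats 1000000
set_option maxHeartbeats 1000000

open scoped ComplexOrder

/-- `E` is the essential set of the uniform algebra `A` on `X`: the smallest closed
set such that every continuous function vanishing on it belongs to `A`. -/
def IsEssentialSet {X : Type*} [TopologicalSpace X]
    (A : Subalgebra ℂ C(X, ℂ)) (E : Set X) : Prop :=
  IsClosed E ∧ (∀ f : C(X, ℂ), (∀ x ∈ E, f x = 0) → f ∈ A) ∧
    ∀ F : Set X, IsClosed F → (∀ f : C(X, ℂ), (∀ x ∈ F, f x = 0) → f ∈ A) → E ⊆ F

/-- Let `A` be a uniform algebra on a compact Hausdorff space `X` whose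
maximal ideal space is `X`.  If `Y` is a closed subset of `X` containing the essential
set of `A`, then the maximal ideal space of the restriction algebra `A|Y` (the uniform
closure of the restrictions to `Y` of functions in `A`) is `Y`: every character of
`A|Y` is evaluation at a point of `Y`. -/
theorem stmt_3 {X : Type*} [TopologicalSpace X] [CompactSpace X] [T2Space X]
    (A : Subalgebra ℂ C(X, ℂ)) (hclosed : IsClosed (A : Set C(X, ℂ)))
    (hsep : ∀ x y : X, x ≠ y → ∃ f ∈ A, f x ≠ f y)
    (hmax : ∀ φ : A →ₐ[ℂ] ℂ, ∃ x : X, ∀ f : A, φ f = (f : C(X, ℂ)) x)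
    (E : Set X) (hE : IsEssentialSet A E)
    (Y : Set X) (hYclosed : IsClosed Y) (hEY : E ⊆ Y)
    (AY : Subalgebra ℂ C(Y, ℂ))
    (hAY : (AY : Set C(Y, ℂ)) = closure
      ((fun f : C(X, ℂ) => f.comp (⟨Subtype.val, continuous_subtype_val⟩ : C(Y, X))) ''
        (A : Set C(X, ℂ)))) :
    ∀ ψ : AY →ₐ[ℂ] ℂ, ∃ y : Y, ∀ g : AY, ψ g = (g : C(Y, ℂ)) y := by
  intro ψ
  haveI : CompactSpace Y := isCompact_iff_compactSpace.mp hYclosed.isCompact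
  set ι : C(Y, X) := ⟨Subtype.val, continuous_subtype_val⟩ with hι
  set Φ : C(X, ℂ) →ₐ[ℂ] C(Y, ℂ) := ContinuousMap.compRightAlgHom ℂ ℂ ι with hΦ
  have hmem : ∀ f : A, Φ (f : C(X, ℂ)) ∈ AY := by
    intro f
    have h1 : Φ (f : C(X, ℂ)) ∈
        ((fun f : C(X, ℂ) => f.comp (⟨Subtype.val, continuous_subtype_val⟩ : C(Y, X))) ''
          (A : Set C(X, ℂ))) := ⟨f, f.2, rfl⟩
    have := subset_closure h1
    rw [← hAY] at this
    exact this
  set ρ : A →ₐ[ℂ] AY := (Φ.comp A.val).codRestrict AY hmem with hρ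
  obtain ⟨x, hx⟩ := hmax (ψ.comp ρ)
  have hxY : x ∈ Y := by
    by_contra hxY
    obtain ⟨f, hf0, hf1, -⟩ := exists_continuous_zero_one_of_isClosed hYclosed
      (isClosed_singleton (x := x)) (by simpa [Set.disjoint_singleton_right] using hxY)
    set g : C(X, ℂ) := (⟨Complex.ofReal, Complex.continuous_ofReal⟩ : C(ℝ, ℂ)).comp f with hg
    have hgA : g ∈ A := hE.2.1 g (fun z hz => by
      simp [hg, hf0 (hEY hz)])
    have h0 : ρ ⟨g, hgA⟩ = 0 := by
      apply Subtype.ext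
      ext z
      simp [hρ, hΦ, hg, hι, hf0 z.2]
    have h1 : ψ (ρ ⟨g, hgA⟩) = 1 := by
      have := hx ⟨g, hgA⟩
      simp only [AlgHom.comp_apply] at this
      rw [this]
      simp [hg, hf1 rfl]
    rw [h0, map_zero] at h1
    exact one_ne_zero h1.symm
  refine ⟨⟨x, hxY⟩, ?_⟩
  -- topological setup
  have hAYclosed : IsClosed (AY : Set C(Y, ℂ)) := by rw [hAY]; exact isClosed_closure
  haveI : CompleteSpace AY := hAYclosed.completeSpace_coe
  have hψc : Continuous ψ := map_continuous ψ
  have hevc : Continuous (fun g : AY => (g : C(Y, ℂ)) ⟨x, hxY⟩) :=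
    (ContinuousEvalConst.continuous_eval_const (⟨x, hxY⟩ : Y)).comp continuous_subtype_val
  have hdense : Dense (Set.range ρ) := by
    intro g
    rw [closure_subtype]
    have hval : Subtype.val '' Set.range ρ =
        ((fun f : C(X, ℂ) => f.comp (⟨Subtype.val, continuous_subtype_val⟩ : C(Y, X))) ''
          (A : Set C(X, ℂ))) := by
      ext h
      constructor
      · rintro ⟨-, ⟨f, rfl⟩, rfl⟩
        exact ⟨f, f.2, rfl⟩
      · rintro ⟨f, hf, rfl⟩
        exact ⟨ρ ⟨f, hf⟩, ⟨⟨f, hf⟩, rfl⟩, rfl⟩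
    rw [hval, ← hAY]
    exact g.2
  have := Continuous.ext_on hdense hψc hevc (by
    rintro - ⟨f, rfl⟩
    have h1 := hx f
    simp only [AlgHom.comp_apply] at h1
    exact h1)
  exact fun g => congrFun this g
end

section
/- Let A be a uniform algebra on a compact Hausdorff space X. There exists a unique smallest closed subset E of X (the essential set) such that every continuous complex-valued function on X that vanishes identically on E belongs to A. -/
/-- Let `A` be a uniform algebra on a compact Hausdorff space `X`.
There exists a unique smallest closed subset `E` of `X` (the essential set) such that
every continuous complex-valued function on `X` vanishing identically on `E` belongs
to `A`: `E` is closed, has the stated property, and is contained in every closed set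
`F` with that property. -/
theorem stmt_6 {X : Type*} [TopologicalSpace X] [CompactSpace X] [T2Space X]
    (A : Subalgebra ℂ C(X, ℂ)) (hclosed : IsClosed (A : Set C(X, ℂ)))
    (hsep : ∀ x y : X, x ≠ y → ∃ f ∈ A, f x ≠ f y) :
    ∃! E : Set X, IsClosed E ∧ (∀ f : C(X, ℂ), (∀ x ∈ E, f x = 0) → f ∈ A) ∧
      ∀ F : Set X, IsClosed F → (∀ f : C(X, ℂ), (∀ x ∈ F, f x = 0) → f ∈ A) → E ⊆ F := by
  -- J is the largest ideal of C(X,ℂ) contained in A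
  set J : Ideal C(X, ℂ) :=
    { carrier := {f | ∀ g : C(X, ℂ), f * g ∈ A}
      add_mem' := fun {f₁ f₂} h1 h2 g => by
        simpa [add_mul] using add_mem (h1 g) (h2 g)
      zero_mem' := fun g => by simpa using zero_mem A
      smul_mem' := fun c f hf g => by
        have h : (c • f) * g = f * (c * g) := by simp only [smul_eq_mul]; ring
        rw [h]; exact hf (c * g) } with hJ
  have hJA : ∀ f ∈ J, f ∈ A := fun f hf => by simpa using hf 1
  have hJclosed : IsClosed (J : Set C(X, ℂ)) := by
    have : (J : Set C(X, ℂ)) = ⋂ g : C(X, ℂ), (fun f => f * g) ⁻¹' (A : Set C(X, ℂ)) := by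
      ext f; simp [hJ, Set.mem_iInter]
    rw [this]
    exact isClosed_iInter fun g => hclosed.preimage (continuous_mul_right g)
  set E : Set X := (ContinuousMap.setOfIdeal J)ᶜ with hE
  have hEclosed : IsClosed E := by
    simpa [hE] using (ContinuousMap.setOfIdeal_open J).isClosed_compl
  have hEprop : ∀ f : C(X, ℂ), (∀ x ∈ E, f x = 0) → f ∈ A := by
    intro f hf
    have hfJ : f ∈ ContinuousMap.idealOfSet ℂ (ContinuousMap.setOfIdeal J) :=
      ContinuousMap.mem_idealOfSet.mpr fun {x} hx => hf x hx
    rw [ContinuousMap.idealOfSet_ofIdeal_eq_closure, J.closure_eq_of_isClosed hJclosed] at hfJ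
    exact hJA f hfJ
  have hEmin : ∀ F : Set X, IsClosed F →
      (∀ f : C(X, ℂ), (∀ x ∈ F, f x = 0) → f ∈ A) → E ⊆ F := by
    intro F hF hFprop x hx
    by_contra hxF
    -- Urysohn: get f vanishing on F with f x ≠ 0
    obtain ⟨f, hf0, hf1, -⟩ := exists_continuous_zero_one_of_isClosed hF
      (isClosed_singleton (x := x)) (Set.disjoint_singleton_right.mpr hxF)
    set g : C(X, ℂ) := ⟨fun y => (f y : ℂ), Complex.continuous_ofReal.comp f.continuous⟩ with hg
    have hgF : ∀ y ∈ F, g y = 0 := fun y hy => by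
      simp [hg, hf0 hy]
    have hgJ : g ∈ J := by
      intro h
      exact hFprop (g * h) fun y hy => by simp [hgF y hy]
    have : x ∈ ContinuousMap.setOfIdeal J :=
      ContinuousMap.mem_setOfIdeal.mpr ⟨g, hgJ, by
        simp [hg, hf1 (Set.mem_singleton x)]⟩
    exact hx this
  refine ⟨E, ⟨hEclosed, hEprop, hEmin⟩, ?_⟩
  rintro F ⟨hF1, hF2, hF3⟩
  exact subset_antisymm (hF3 E hEclosed hEprop) (hEmin F hF1 hF2)
end

section
/- Let M be an m-dimensional C^1 manifold and Φ a point-separating collection of complex-valued C^1 functions on an open connected subset Ω of M. Suppose that at no point of Ω do the differentials of the real and imaginary parts of the functions in Φ span the real cotangent space of M. Let k be the maximal dimension over points y ∈ Ω of the real span of the differentials at y of real and imaginary parts of functions in Φ, and let y be a point where this maximum is attained. Then there exist functions g_1, ..., g_k in Φ and a neighborhood of y on which the common level set of g_1, ..., g_k through y is a C^1 submanifold of positive dimension on which every function in Φ is constant; in particular Φ fails to separate points near y (a contradiction), so in fact the differentials of the real and imaginary parts of functions in Φ must span the cotangent space at some point of Ω. -/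
/-!
Suppose the differentials of the real and imaginary parts of `Φ` span a proper subspace of
`T*_y M` at every `y ∈ Ω`, and take `y` where the dimension `k` of this span is maximal. In a chart,
choose `g₁, …, g_k` among these real functions with independent differentials at `y`. Independence
persists near `y`, and by maximality of `k` the differentials of `g₁, …, g_k` then span those of all
the functions. By the implicit function theorem the common level set of `g₁, …, g_k` through `y` is
locally a `C¹` submanifold of dimension `m - k > 0`; along it `d g_i` vanish, hence so does the
differential of every real or imaginary part, so all functions of `Φ` are constant on it and `Φ`
does not separate its points.
-/

open Set Submodule Module Filter
open scoped Topology Manifold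

universe u

theorem ContinuousLinearMap.surjective_pi_of_linearIndependent {ι E : Type*} [Finite ι]
    [AddCommGroup E] [Module ℝ E] [TopologicalSpace E] {ℓ : ι → E →L[ℝ] ℝ}
    (h : LinearIndependent ℝ ℓ) : Function.Surjective (ContinuousLinearMap.pi ℓ) := by
  have hfun : LinearIndependent ℝ fun i => ⇑(ℓ i) :=
    h.map' (LinearMap.ltoFun ℝ E ℝ ℝ ∘ₗ ContinuousLinearMap.coeLM ℝ)
      (LinearMap.ker_eq_bot.2 fun _ _ h => DFunLike.coe_injective h)
  have hrange : LinearMap.range (ContinuousLinearMap.pi ℓ : E →ₗ[ℝ] ι → ℝ) = ⊤ := by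
    rw [← span_flip_eq_top_iff_linearIndependent.2 hfun, ← span_eq (LinearMap.range _),
      LinearMap.coe_range]
    rfl
  exact LinearMap.range_eq_top.1 hrange

theorem finrank_span_range_comp_continuousLinearEquiv {ι E E' : Type*} [AddCommGroup E]
    [Module ℝ E] [TopologicalSpace E] [AddCommGroup E'] [Module ℝ E'] [TopologicalSpace E']
    (A : E' ≃L[ℝ] E) (v : ι → E →L[ℝ] ℝ) :
    finrank ℝ (span ℝ (range fun i => ((v i).comp (A : E' →L[ℝ] E) : Module.Dual ℝ E'))) =
      finrank ℝ (span ℝ (range v)) := by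
  let L : (E →L[ℝ] ℝ) →ₗ[ℝ] Module.Dual ℝ E' :=
    A.toLinearEquiv.dualMap.toLinearMap ∘ₗ ContinuousLinearMap.coeLM ℝ
  have hL : Function.Injective L :=
    A.toLinearEquiv.dualMap.injective.comp ContinuousLinearMap.coe_injective
  rw [show (fun i => ((v i).comp (A : E' →L[ℝ] E) : Module.Dual ℝ E')) = L ∘ v from rfl,
    range_comp, span_image]
  exact (equivMapOfInjective L hL _).finrank_eq.symm

section Euclidean

variable {E : Type*} [NormedAddCommGroup E] [NormedSpace ℝ E]

/-- `γ c` is the point of the level set `U = U p₀` near `p₀` whose component along the kernel of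
`fderiv ℝ U p₀`, for a splitting of `E`, is `c`. -/
theorem ContDiffAt.exists_injOn_levelSet [CompleteSpace E] {F : Type*} [NormedAddCommGroup F]
    [NormedSpace ℝ F] [FiniteDimensional ℝ F] {U : E → F} {p₀ : E} (hU : ContDiffAt ℝ 1 U p₀)
    (hsurj : (fderiv ℝ U p₀ : E →ₗ[ℝ] F).range = ⊤) {W : Set E} (hW : W ∈ 𝓝 p₀) :
    ∃ γ : (fderiv ℝ U p₀ : E →ₗ[ℝ] F).ker → E, γ 0 = p₀ ∧ ∃ ε > 0,
      InjOn γ (Metric.ball 0 ε) ∧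
      ∀ c ∈ Metric.ball 0 ε, DifferentiableAt ℝ γ c ∧ U (γ c) = U p₀ ∧ γ c ∈ W := by
  have := FiniteDimensional.complete ℝ F
  let φ := HasStrictFDerivAt.implicitFunctionDataOfComplemented U (fderiv ℝ U p₀)
    (hU.hasStrictFDerivAt one_ne_zero) hsurj
    (fderiv ℝ U p₀).ker_closedComplemented_of_finiteDimensional_range
  have hpt : φ.prodFun φ.pt = (U p₀, 0) := by simp [φ]
  have hγ0 : φ.implicitFunction (U p₀) 0 = p₀ := by
    simpa [φ] using φ.implicitFunction_apply_image.self_of_nhds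
  have hsmooth : ContDiffAt ℝ 1 φ.implicitFunction.uncurry (φ.prodFun φ.pt) :=
    φ.contDiffAt_implicitFunction hU (by simp only [φ]; fun_prop) one_ne_zero
  have hslice : Tendsto (fun c => (U p₀, c)) (𝓝 0) (𝓝 (φ.prodFun φ.pt)) := by
    rw [hpt]
    exact (continuous_const.prodMk continuous_id).tendsto 0
  have hγ : Tendsto (φ.implicitFunction (U p₀)) (𝓝 0) (𝓝 p₀) := by
    have := hsmooth.continuousAt.tendsto.comp hslice
    rw [hpt, Function.uncurry_apply_pair, hγ0] at this
    exact this
  obtain ⟨ε, hε, hball⟩ := Metric.mem_nhds_iff.1 <| hslice.eventually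
    ((hsmooth.eventually (by simp)).and (φ.leftFun_implicitFunction.and
      φ.rightFun_implicitFunction)) |>.and (hγ.eventually hW)
  refine ⟨φ.implicitFunction (U p₀), hγ0, ε, hε, fun c hc c' hc' h => ?_, fun c hc => ?_⟩
  · exact (hball hc).1.2.2.symm.trans ((congrArg φ.rightFun h).trans (hball hc').1.2.2)
  · obtain ⟨⟨hcsmooth, hcU, -⟩, hcW⟩ := hball hc
    exact ⟨(hcsmooth.comp c (contDiffAt_const.prodMk contDiffAt_id)).differentiableAt
      one_ne_zero, hcU, hcW⟩

theorem hasFDerivAt_comp_eq_zero_of_mem_span {K : Type*} [NormedAddCommGroup K]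
    [NormedSpace ℝ K] {κ : Type*} {u : κ → E → ℝ} {h : E → ℝ} {γ : K → E} {c : K}
    (hγ : DifferentiableAt ℝ γ c) (hu : ∀ j, DifferentiableAt ℝ (u j) (γ c))
    (hh : DifferentiableAt ℝ h (γ c)) (hconst : ∀ᶠ c' in 𝓝 c, ∀ j, u j (γ c') = u j (γ c))
    (hspan : fderiv ℝ h (γ c) ∈ span ℝ (range fun j => fderiv ℝ (u j) (γ c))) :
    HasFDerivAt (h ∘ γ) (0 : K →L[ℝ] ℝ) c := by
  have hvanish : ∀ j, (fderiv ℝ (u j) (γ c)).comp (fderiv ℝ γ c) = 0 := fun j =>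
    ((hu j).hasFDerivAt.comp c hγ.hasFDerivAt).unique <|
      (hasFDerivAt_const (u j (γ c)) c).congr_of_eventuallyEq <| hconst.mono fun _ h => h j
  have hspan_le : span ℝ (range fun j => fderiv ℝ (u j) (γ c)) ≤
      LinearMap.ker ((ContinuousLinearMap.compL ℝ K E ℝ).flip (fderiv ℝ γ c) :
        (E →L[ℝ] ℝ) →ₗ[ℝ] K →L[ℝ] ℝ) :=
    span_le.2 <| range_subset_iff.2 hvanish
  have hzero : (fderiv ℝ h (γ c)).comp (fderiv ℝ γ c) = 0 := by simpa using hspan_le hspan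
  exact hzero ▸ hh.hasFDerivAt.comp c hγ.hasFDerivAt

variable [FiniteDimensional ℝ E] {ι : Type u} {g : ι → E → ℝ} {V : Set E} {p₀ : E}

theorem exists_subfamily_fderiv_linearIndependent_spanning (hV : IsOpen V) (hp₀ : p₀ ∈ V)
    (hg : ∀ i, ContDiffOn ℝ 1 (g i) V)
    (hmax : ∀ p ∈ V, finrank ℝ (span ℝ (range fun i => fderiv ℝ (g i) p)) ≤
      finrank ℝ (span ℝ (range fun i => fderiv ℝ (g i) p₀))) :
    ∃ (κ : Type u) (_ : Fintype κ) (a : κ → ι),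
      LinearIndependent ℝ (fun j => fderiv ℝ (g (a j)) p₀) ∧
      Fintype.card κ = finrank ℝ (span ℝ (range fun i => fderiv ℝ (g i) p₀)) ∧
      ∀ᶠ p in 𝓝 p₀, p ∈ V ∧
        ∀ i, fderiv ℝ (g i) p ∈ span ℝ (range fun j => fderiv ℝ (g (a j)) p) := by
  obtain ⟨κ, a, -, hspan, hli⟩ := exists_linearIndependent' ℝ fun i => fderiv ℝ (g i) p₀
  have : Finite κ := hli.finite
  have := Fintype.ofFinite κ
  have hcard : Fintype.card κ = finrank ℝ (span ℝ (range fun i => fderiv ℝ (g i) p₀)) := by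
    rw [← hspan, finrank_span_eq_card hli]
  have hcont : ContinuousAt (fun p j => fderiv ℝ (g (a j)) p) p₀ :=
    continuousAt_pi.2 fun j =>
      ((hg (a j)).continuousOn_fderiv_of_isOpen hV le_rfl).continuousAt (hV.mem_nhds hp₀)
  refine ⟨κ, inferInstance, a, hli, hcard, ?_⟩
  filter_upwards [hV.mem_nhds hp₀, hcont.eventually hli.eventually] with p hpV hpli
  refine ⟨hpV, fun i => ?_⟩
  -- near `p₀` the subfamily stays independent, so it spans a space of the maximal dimension
  have hle : span ℝ (range fun j => fderiv ℝ (g (a j)) p) ≤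
      span ℝ (range fun i => fderiv ℝ (g i) p) :=
    span_mono (range_comp_subset_range a fun i => fderiv ℝ (g i) p)
  rw [eq_of_le_of_finrank_le hle (by rw [finrank_span_eq_card hpli, hcard]; exact hmax p hpV)]
  exact subset_span (mem_range_self i)

theorem exists_ne_forall_apply_eq_of_finrank_span_fderiv_lt (hV : IsOpen V) (hp₀ : p₀ ∈ V)
    (hg : ∀ i, ContDiffOn ℝ 1 (g i) V)
    (hmax : ∀ p ∈ V, finrank ℝ (span ℝ (range fun i => fderiv ℝ (g i) p)) ≤
      finrank ℝ (span ℝ (range fun i => fderiv ℝ (g i) p₀)))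
    (hlt : finrank ℝ (span ℝ (range fun i => fderiv ℝ (g i) p₀)) < finrank ℝ E) :
    ∃ p ∈ V, p ≠ p₀ ∧ ∀ i, g i p = g i p₀ := by
  obtain ⟨κ, _, a, hli, hcard, hnear⟩ :=
    exists_subfamily_fderiv_linearIndependent_spanning hV hp₀ hg hmax
  have hdiff : ∀ i, ∀ p ∈ V, DifferentiableAt ℝ (g i) p := fun i p hp =>
    ((hg i).differentiableOn one_ne_zero).differentiableAt (hV.mem_nhds hp)
  set U : E → κ → ℝ := fun p j => g (a j) p
  have hU : ContDiffAt ℝ 1 U p₀ :=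
    contDiffAt_pi.2 fun j => (hg (a j)).contDiffAt (hV.mem_nhds hp₀)
  have hDU : fderiv ℝ U p₀ = ContinuousLinearMap.pi fun j => fderiv ℝ (g (a j)) p₀ :=
    fderiv_pi fun j => hdiff _ _ hp₀
  have hsurj : (fderiv ℝ U p₀ : E →ₗ[ℝ] κ → ℝ).range = ⊤ := by
    rw [hDU]
    exact LinearMap.range_eq_top.2 (ContinuousLinearMap.surjective_pi_of_linearIndependent hli)
  set K := (fderiv ℝ U p₀ : E →ₗ[ℝ] κ → ℝ).ker
  have : Nontrivial K :=
    nontrivial_iff_ne_bot.2 <| LinearMap.ker_ne_bot_of_finrank_lt <| by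
      rwa [finrank_fintype_fun_eq_card, hcard]
  obtain ⟨γ, hγ0, ε, hε, hinj, hγ⟩ := hU.exists_injOn_levelSet hsurj hnear
  obtain ⟨c, hc0, hc⟩ :=
    Filter.nonempty_of_mem (inter_mem_nhdsWithin {0}ᶜ (Metric.ball_mem_nhds (0 : K) hε))
  refine ⟨γ c, (hγ c hc).2.2.1, fun h => hc0 (hinj hc (Metric.mem_ball_self hε)
    (h.trans hγ0.symm)), fun i => ?_⟩
  have hderiv : ∀ c' ∈ Metric.ball 0 ε, HasFDerivAt (g i ∘ γ) (0 : K →L[ℝ] ℝ) c' := by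
    intro c' hc'
    obtain ⟨hγc', hUc', hc'V, hc'span⟩ := hγ c' hc'
    refine hasFDerivAt_comp_eq_zero_of_mem_span hγc' (fun j => hdiff _ _ hc'V)
      (hdiff _ _ hc'V) ?_ (hc'span i)
    filter_upwards [Metric.isOpen_ball.mem_nhds hc'] with c'' hc''
    exact congrFun ((hγ c'' hc'').2.1.trans hUc'.symm)
  rw [← hγ0]
  exact Metric.isOpen_ball.is_const_of_fderiv_eq_zero (convex_ball 0 ε).isPreconnected
    (fun c' hc' => (hderiv c' hc').differentiableAt.differentiableWithinAt)
    (fun c' hc' => (hderiv c' hc').fderiv) hc (Metric.mem_ball_self hε)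

end Euclidean

noncomputable def reImCLM : Bool → ℂ →L[ℝ] ℝ
  | true => Complex.reCLM
  | false => Complex.imCLM

section Manifold

variable (E : Type*) [NormedAddCommGroup E] [NormedSpace ℝ E]
  {M : Type*} [TopologicalSpace M] [ChartedSpace E M]

noncomputable def reImDiffSpan (Φ : Set (M → ℂ)) (x : M) :
    Submodule ℝ (Module.Dual ℝ (TangentSpace 𝓘(ℝ, E) x)) :=
  span ℝ {ℓ | ∃ f ∈ Φ, ℓ = (Complex.reCLM.comp (mfderiv 𝓘(ℝ, E) 𝓘(ℝ, ℂ) f x)).toLinearMap ∨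
    ℓ = (Complex.imCLM.comp (mfderiv 𝓘(ℝ, E) 𝓘(ℝ, ℂ) f x)).toLinearMap}

variable {E}

theorem reImDiffSpan_eq (Φ : Set (M → ℂ)) (x : M) :
    reImDiffSpan E Φ x = span ℝ (range fun i : Φ × Bool =>
      ((reImCLM i.2).comp (mfderiv 𝓘(ℝ, E) 𝓘(ℝ, ℂ) (i.1 : M → ℂ) x) :
        Module.Dual ℝ (TangentSpace 𝓘(ℝ, E) x))) := by
  rw [reImDiffSpan]
  congr 1
  ext ℓ
  simp [reImCLM, eq_comm, or_comm]

variable [IsManifold 𝓘(ℝ, E) 1 M]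

theorem ContMDiffOn.contDiffOn_comp_chartAt_symm {F : Type*} [NormedAddCommGroup F]
    [NormedSpace ℝ F] {f : M → F} {Ω : Set M} (hf : ContMDiffOn 𝓘(ℝ, E) 𝓘(ℝ, F) 1 f Ω) (y : M) :
    ContDiffOn ℝ 1 (f ∘ (chartAt E y).symm) ((chartAt E y).target ∩ (chartAt E y).symm ⁻¹' Ω) :=
  contMDiffOn_iff_contDiffOn.1 <|
    hf.comp (contMDiffOn_chart_symm.mono inter_subset_left) fun _ hp => hp.2

theorem mfderiv_eq_fderiv_comp_chartAt_symm {F : Type*} [NormedAddCommGroup F] [NormedSpace ℝ F]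
    {f : M → F} {x y : M} (hx : x ∈ (chartAt E y).source)
    (hf : DifferentiableAt ℝ (f ∘ (chartAt E y).symm) (chartAt E y x)) :
    mfderiv 𝓘(ℝ, E) 𝓘(ℝ, F) f x = (fderiv ℝ (f ∘ (chartAt E y).symm) (chartAt E y x)).comp
      (mfderiv 𝓘(ℝ, E) 𝓘(ℝ, E) (chartAt E y) x) := by
  have hloc : f =ᶠ[𝓝 x] (f ∘ (chartAt E y).symm) ∘ chartAt E y :=
    eventually_of_mem ((chartAt E y).open_source.mem_nhds hx) fun z hz => by
      simp [(chartAt E y).left_inv hz]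
  rw [hloc.mfderiv_eq, mfderiv_comp x (mdifferentiableAt_iff_differentiableAt.2 hf)
    ((mdifferentiable_chart y).mdifferentiableAt hx), mfderiv_eq_fderiv]
  rfl

theorem finrank_reImDiffSpan_eq_finrank_span_fderiv {Φ : Set (M → ℂ)} {Ω : Set M}
    (hΩ : IsOpen Ω) (hΦ : ∀ f ∈ Φ, ContMDiffOn 𝓘(ℝ, E) 𝓘(ℝ, ℂ) 1 f Ω) {x y : M} (hx : x ∈ Ω)
    (hxy : x ∈ (chartAt E y).source) :
    finrank ℝ (reImDiffSpan E Φ x) = finrank ℝ (span ℝ (range fun i : Φ × Bool =>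
      fderiv ℝ (reImCLM i.2 ∘ i.1 ∘ (chartAt E y).symm) (chartAt E y x))) := by
  let A : TangentSpace 𝓘(ℝ, E) x ≃L[ℝ] E := (mdifferentiable_chart y).mfderiv hxy
  have hterm : ∀ i : Φ × Bool,
      ((reImCLM i.2).comp (mfderiv 𝓘(ℝ, E) 𝓘(ℝ, ℂ) (i.1 : M → ℂ) x) :
        Module.Dual ℝ (TangentSpace 𝓘(ℝ, E) x)) =
      (fderiv ℝ (reImCLM i.2 ∘ i.1 ∘ (chartAt E y).symm) (chartAt E y x)).comp
        (A : TangentSpace 𝓘(ℝ, E) x →L[ℝ] E) := by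
    intro i
    have hdiff : DifferentiableAt ℝ ((i.1 : M → ℂ) ∘ (chartAt E y).symm) (chartAt E y x) :=
      ((hΦ _ i.1.2).contDiffOn_comp_chartAt_symm y).differentiableOn one_ne_zero
        |>.differentiableAt <| ((chartAt E y).isOpen_inter_preimage_symm hΩ).mem_nhds
          ⟨(chartAt E y).map_source hxy, by simpa [(chartAt E y).left_inv hxy]⟩
    rw [mfderiv_eq_fderiv_comp_chartAt_symm hxy hdiff,
      fderiv_comp _ (reImCLM i.2).differentiableAt hdiff, ContinuousLinearMap.fderiv]
    rfl
  rw [reImDiffSpan_eq, funext hterm]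
  exact finrank_span_range_comp_continuousLinearEquiv A _

theorem exists_ne_forall_apply_eq_of_isMaxOn_finrank [FiniteDimensional ℝ E]
    {Φ : Set (M → ℂ)} {Ω : Set M} (hΩ : IsOpen Ω)
    (hΦ : ∀ f ∈ Φ, ContMDiffOn 𝓘(ℝ, E) 𝓘(ℝ, ℂ) 1 f Ω) {y : M} (hy : y ∈ Ω)
    (hmax : IsMaxOn (fun x => finrank ℝ (reImDiffSpan E Φ x)) Ω y)
    (hlt : reImDiffSpan E Φ y ≠ ⊤) :
    ∃ x ∈ Ω, x ≠ y ∧ ∀ f ∈ Φ, f x = f y := by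
  set φ := chartAt E y
  have hyφ : y ∈ φ.source := mem_chart_source E y
  have hrank := fun x (hx : x ∈ Ω) (hxy : x ∈ φ.source) =>
    finrank_reImDiffSpan_eq_finrank_span_fderiv hΩ hΦ hx hxy
  have : FiniteDimensional ℝ (TangentSpace 𝓘(ℝ, E) y) := inferInstanceAs (FiniteDimensional ℝ E)
  have hrank_lt : finrank ℝ (reImDiffSpan E Φ y) < finrank ℝ E :=
    (Submodule.finrank_lt hlt).trans_eq Subspace.dual_finrank_eq
  obtain ⟨p, hp, hne, hg⟩ := exists_ne_forall_apply_eq_of_finrank_span_fderiv_lt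
    (g := fun i : Φ × Bool => reImCLM i.2 ∘ i.1 ∘ φ.symm) (φ.isOpen_inter_preimage_symm hΩ)
    ⟨φ.map_source hyφ, by simpa [φ.left_inv hyφ]⟩
    (fun i => (reImCLM i.2).contDiff.comp_contDiffOn ((hΦ _ i.1.2).contDiffOn_comp_chartAt_symm y))
    (fun p hp => by
      rw [← φ.right_inv hp.1, ← hrank _ hp.2 (φ.map_target hp.1), ← hrank y hy hyφ]
      exact hmax hp.2)
    (hrank y hy hyφ ▸ hrank_lt)
  refine ⟨φ.symm p, hp.2, fun h => hne ?_, fun f hf => Complex.ext ?_ ?_⟩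
  · rw [← φ.right_inv hp.1, h]
  · simpa [reImCLM, φ.left_inv hyφ] using hg (⟨f, hf⟩, true)
  · simpa [reImCLM, φ.left_inv hyφ] using hg (⟨f, hf⟩, false)

end Manifold

theorem stmt_13_general {m : ℕ} {M : Type*} [TopologicalSpace M]
    [ChartedSpace (EuclideanSpace ℝ (Fin m)) M]
    [HasGroupoid M (contDiffGroupoid 1 (𝓡 m))]
    (Ω : Set M) (hΩ : IsOpen Ω) (hconn : IsConnected Ω)
    (Φ : Set (M → ℂ))
    (hΦ : ∀ f ∈ Φ, ContMDiffOn (𝓡 m) 𝓘(ℝ, ℂ) 1 f Ω)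
    (hsep : ∀ x ∈ Ω, ∀ y ∈ Ω, x ≠ y → ∃ f ∈ Φ, f x ≠ f y) :
    ∃ x ∈ Ω, Submodule.span ℝ
      {ℓ : Module.Dual ℝ (TangentSpace (𝓡 m) x) | ∃ f ∈ Φ,
        ℓ = (Complex.reCLM.comp (mfderiv (𝓡 m) 𝓘(ℝ, ℂ) f x)).toLinearMap ∨
        ℓ = (Complex.imCLM.comp (mfderiv (𝓡 m) 𝓘(ℝ, ℂ) f x)).toLinearMap} = ⊤ := by
  have : IsManifold (𝓡 m) 1 M := .mk' _ _ _
  by_contra! hcon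
  have (x : M) : FiniteDimensional ℝ (TangentSpace (𝓡 m) x) :=
    inferInstanceAs (FiniteDimensional ℝ (EuclideanSpace ℝ (Fin m)))
  let r := fun x => finrank ℝ (reImDiffSpan (EuclideanSpace ℝ (Fin m)) Φ x)
  obtain ⟨-, ⟨y, hy, rfl⟩, hgreatest⟩ := BddAbove.exists_isGreatest_of_nonempty
    ⟨finrank ℝ (Module.Dual ℝ (EuclideanSpace ℝ (Fin m))), by
      rintro _ ⟨x, -, rfl⟩
      exact Submodule.finrank_le _⟩ (hconn.nonempty.image r)
  obtain ⟨x, hx, hxy, hΦxy⟩ := exists_ne_forall_apply_eq_of_isMaxOn_finrank hΩ hΦ hy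
    (fun x hx => hgreatest ⟨x, hx, rfl⟩) (hcon y hy)
  obtain ⟨f, hf, hne⟩ := hsep x hx y hy hxy
  exact hne (hΦxy f hf)

/-- Let `M` be an `m`-dimensional `C¹` manifold and `Φ` a
point-separating collection of complex-valued `C¹` functions on an open connected
subset `Ω` of `M`.  Then the differentials of the real and imaginary parts of the
functions in `Φ` must span the (real) cotangent space of `M` at some point of `Ω`
(otherwise, at a point where the dimension of their span is maximal, a common level
set of finitely many functions of `Φ` would be a positive-dimensional `C¹` manifold
on which every function in `Φ` is constant, contradicting point separation). -/
theorem stmt_13 {m : ℕ} {M : Type*} [TopologicalSpace M] [T2Space M]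
    [ChartedSpace (EuclideanSpace ℝ (Fin m)) M]
    [HasGroupoid M (contDiffGroupoid 1 (𝓡 m))]
    (Ω : Set M) (hΩ : IsOpen Ω) (hconn : IsConnected Ω)
    (Φ : Set (M → ℂ))
    (hΦ : ∀ f ∈ Φ, ContMDiffOn (𝓡 m) 𝓘(ℝ, ℂ) 1 f Ω)
    (hsep : ∀ x ∈ Ω, ∀ y ∈ Ω, x ≠ y → ∃ f ∈ Φ, f x ≠ f y) :
    ∃ x ∈ Ω, Submodule.span ℝ
      {ℓ : Module.Dual ℝ (TangentSpace (𝓡 m) x) | ∃ f ∈ Φ,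
        ℓ = (Complex.reCLM.comp (mfderiv (𝓡 m) 𝓘(ℝ, ℂ) f x)).toLinearMap ∨
        ℓ = (Complex.imCLM.comp (mfderiv (𝓡 m) 𝓘(ℝ, ℂ) f x)).toLinearMap} = ⊤ :=
  stmt_13_general Ω hΩ hconn Φ hΦ hsep
end
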